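/- Let G = (V,E) be a finite simple graph and let β : ℝ₊^V → ℝ be a positive definite monotone gauge. If α(G,w) ≤ β(w) ≤ ‖w‖₁ for every w ∈ ℝ₊^V, then ‖z‖_∞ ≤ β∘(z) ≤ χ_f(G,z) for every z ∈ ℝ₊^V. Conversely, if ‖z‖_∞ ≤ β(z) ≤ χ_f(G,z) for every z ∈ ℝ₊^V, then α(G,w) ≤ β∘(w) ≤ ‖w‖₁ for every w ∈ ℝ₊^V. -/

import Mathlib

open scoped BigOperators Pointwise

variable {V : Type*} [Fintype V] [DecidableEq V]

/-- Inner product on `ℝ^V`. -/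
def ip (w z : V → ℝ) : ℝ := ∑ i, w i * z i

/-- `κ` is a positive definite monotone gauge on the nonnegative orthant of `ℝ^V`. -/
def IsPDMGauge (κ : (V → ℝ) → ℝ) : Prop :=
  κ 0 = 0 ∧
  (∀ w : V → ℝ, 0 ≤ w → 0 ≤ κ w) ∧
  (∀ (c : ℝ) (w : V → ℝ), 0 < c → 0 ≤ w → κ (c • w) = c * κ w) ∧
  (∀ w z : V → ℝ, 0 ≤ w → 0 ≤ z → κ (w + z) ≤ κ w + κ z) ∧
  (∀ w : V → ℝ, 0 ≤ w → w ≠ 0 → 0 < κ w) ∧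
  (∀ w z : V → ℝ, 0 ≤ w → w ≤ z → κ w ≤ κ z)

/-- The dual gauge `κ∘(z) = sup{⟨w,z⟩ : w ≥ 0, κ(w) ≤ 1}`. -/
noncomputable def dualGauge (κ : (V → ℝ) → ℝ) (z : V → ℝ) : ℝ :=
  sSup {r : ℝ | ∃ w : V → ℝ, 0 ≤ w ∧ κ w ≤ 1 ∧ r = ip w z}

/-- The antiblocker of a subset of the nonnegative orthant. -/
def abl (X : Set (V → ℝ)) : Set (V → ℝ) := {y | 0 ≤ y ∧ ∀ x ∈ X, ip x y ≤ 1}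

/-- A convex corner: compact, convex, nonempty interior, subset of the nonnegative
orthant, and lower-comprehensive. -/
def IsConvexCorner (C : Set (V → ℝ)) : Prop :=
  IsCompact C ∧ Convex ℝ C ∧ (interior C).Nonempty ∧ (∀ x ∈ C, 0 ≤ x) ∧
  ∀ x y : V → ℝ, 0 ≤ x → x ≤ y → y ∈ C → x ∈ C

/-- Minkowski functional of a set. -/
noncomputable def minkowski (C : Set (V → ℝ)) (x : V → ℝ) : ℝ :=
  sInf {μ : ℝ | 0 ≤ μ ∧ x ∈ μ • C}

/-- Support function of a set. -/
noncomputable def suppFn (C : Set (V → ℝ)) (y : V → ℝ) : ℝ :=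
  sSup {r : ℝ | ∃ x ∈ C, r = ip x y}

/-- A stable (independent) set of vertices. -/
def IsStableSet (G : SimpleGraph V) (S : Finset V) : Prop :=
  ∀ i ∈ S, ∀ j ∈ S, ¬ G.Adj i j

/-- Weighted stability number `α(G,w)`. -/
noncomputable def alphaW (G : SimpleGraph V) (w : V → ℝ) : ℝ :=
  sSup {r : ℝ | ∃ S : Finset V, IsStableSet G S ∧ r = ∑ i ∈ S, w i}

/-- Stability number `α(G)`. -/
noncomputable def stabilityNumber (G : SimpleGraph V) : ℕ :=
  sSup {n : ℕ | ∃ S : Finset V, IsStableSet G S ∧ S.card = n}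

/-- Weighted fractional chromatic number `χ_f(G,w)`. -/
noncomputable def chiF (G : SimpleGraph V) (w : V → ℝ) : ℝ :=
  sInf {r : ℝ | ∃ y : Finset V → ℝ,
    (∀ S, 0 ≤ y S) ∧ (∀ S, ¬ IsStableSet G S → y S = 0) ∧
    (∀ i, w i ≤ ∑ S : Finset V, (if i ∈ S then y S else 0)) ∧
    r = ∑ S : Finset V, y S}

/-- The stable set polytope `STAB(G)`. -/
def STABset (G : SimpleGraph V) : Set (V → ℝ) :=
  convexHull ℝ {x : V → ℝ | ∃ S : Finset V, IsStableSet G S ∧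
    x = fun i => if i ∈ S then (1 : ℝ) else 0}

/-- The fractional stable set polytope `QSTAB(G)`. -/
def QSTABset (H : SimpleGraph V) : Set (V → ℝ) :=
  {x | 0 ≤ x ∧ ∀ K : Finset V, H.IsClique (↑K : Set V) → ∑ i ∈ K, x i ≤ 1}

/-- The set of (real) eigenvalues of a matrix. -/
def spectrumSet (M : Matrix V V ℝ) : Set ℝ :=
  {t | ∃ x : V → ℝ, x ≠ 0 ∧ M.mulVec x = t • x}

/-- Largest eigenvalue. -/
noncomputable def lambdaMax (M : Matrix V V ℝ) : ℝ := sSup (spectrumSet M)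

/-- Smallest eigenvalue. -/
noncomputable def lambdaMin (M : Matrix V V ℝ) : ℝ := sInf (spectrumSet M)

/-- Positive semidefinite square root (zero on non-PSD matrices). -/
noncomputable def psdSqrt (M : Matrix V V ℝ) : Matrix V V ℝ :=
  letI := Classical.dec M.PosSemidef
  if h : M.PosSemidef then
    (h.1.eigenvectorUnitary : Matrix V V ℝ) *
      Matrix.diagonal ((↑) ∘ (√·) ∘ h.1.eigenvalues) *
      (star h.1.eigenvectorUnitary : Matrix V V ℝ)
  else 0

/-- `Â = A / (-λ_min(A))` for nonzero `A`, and `0̂ = 0`. -/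
noncomputable def hatM (A : Matrix V V ℝ) : Matrix V V ℝ :=
  if A = 0 then 0 else (-(lambdaMin A))⁻¹ • A

/-- `A` is a generalized adjacency matrix of `G`: symmetric, with `A i j = 0`
whenever `i` and `j` are non-adjacent (in particular on the diagonal). -/
def IsGenAdj (G : SimpleGraph V) (A : Matrix V V ℝ) : Prop :=
  A.IsSymm ∧ ∀ i j, ¬ G.Adj i j → A i j = 0

/-- Weighted Hoffman bound `H(A,w) = λ_max(W^{1/2}(I+Â)W^{1/2})`, `W = Diag w`. -/
noncomputable def hoffman (A : Matrix V V ℝ) (w : V → ℝ) : ℝ :=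
  lambdaMax (psdSqrt (Matrix.diagonal w) * (1 + hatM A) * psdSqrt (Matrix.diagonal w))

/-- The feasible region `𝒰_A` of the SDP defining `Υ(A,·)`. -/
def Uset (A : Matrix V V ℝ) : Set (V → ℝ) :=
  {x | 0 ≤ x ∧ ((1 : Matrix V V ℝ) -
    psdSqrt (1 + hatM A) * Matrix.diagonal x * psdSqrt (1 + hatM A)).PosSemidef}

/-- `Υ(A,w) = max{⟨w,x⟩ : x ≥ 0, (I+Â)^{1/2} Diag(x) (I+Â)^{1/2} ⪯ I}`. -/
noncomputable def upsilon (A : Matrix V V ℝ) (w : V → ℝ) : ℝ :=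
  sSup {r : ℝ | ∃ x ∈ Uset A, r = ip w x}

/-- The diagonal of a matrix, as a vector. -/
def diagVec (M : Matrix V V ℝ) : V → ℝ := fun i => M i i

/-- The convex corner `ℋ_A`. -/
def Hset (A : Matrix V V ℝ) : Set (V → ℝ) :=
  {x | 0 ≤ x ∧ ∃ Y : Matrix V V ℝ, Y.PosSemidef ∧ Y.trace ≤ 1 ∧
    ∀ i, x i ≤ diagVec (psdSqrt (1 + hatM A) * Y * psdSqrt (1 + hatM A)) i}

/-- Objective function of Luz's convex quadratic program:
`2⟨w,x⟩ − ⟨x, W^{1/2}(I+Â)W^{1/2} x⟩`. -/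
noncomputable def luzObj (A : Matrix V V ℝ) (w x : V → ℝ) : ℝ :=
  2 * ip w x - ∑ i, x i *
    ((psdSqrt (Matrix.diagonal w) * (1 + hatM A) * psdSqrt (Matrix.diagonal w)).mulVec x) i

/-- Luz's bound `ℓ(A,w)` as a real number (supremum of the CQP objective). -/
noncomputable def luz (A : Matrix V V ℝ) (w : V → ℝ) : ℝ :=
  sSup {r : ℝ | ∃ x : V → ℝ, 0 ≤ x ∧ r = luzObj A w x}

/-- Luz's bound `ℓ(A,w)` with values in `ℝ ∪ {±∞}`. -/
noncomputable def luzE (A : Matrix V V ℝ) (w : V → ℝ) : EReal :=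
  sSup {r : EReal | ∃ x : V → ℝ, 0 ≤ x ∧ r = ((luzObj A w x : ℝ) : EReal)}

/-- The theta body `TH(G)`. -/
def THbody (G : SimpleGraph V) : Set (V → ℝ) :=
  {x | 0 ≤ x ∧ ∃ X : Matrix V V ℝ, X.PosSemidef ∧ (∀ i, X i i = x i) ∧
    (∀ i j, G.Adj i j → X i j = 0) ∧
    (Matrix.fromBlocks (1 : Matrix Unit Unit ℝ) (Matrix.of fun _ j => x j)
      (Matrix.of fun i _ => x i) X).PosSemidef}

/-- Weighted Lovász theta number `θ(G,w)`. -/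
noncomputable def thetaW (G : SimpleGraph V) (w : V → ℝ) : ℝ :=
  sSup {r : ℝ | ∃ x ∈ THbody G, r = ip w x}

section BCAux

variable (G : SimpleGraph V)

lemma alphaSet_bddAbove (w : V → ℝ) :
    BddAbove {r : ℝ | ∃ S : Finset V, IsStableSet G S ∧ r = ∑ i ∈ S, w i} :=
  (((Set.finite_range (fun S : Finset V => ∑ i ∈ S, w i)).subset
    (by rintro r ⟨S, _, rfl⟩; exact ⟨S, rfl⟩))).bddAbove

lemma stable_sum_le_alpha (w : V → ℝ) {S : Finset V} (hS : IsStableSet G S) :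
    ∑ i ∈ S, w i ≤ alphaW G w :=
  le_csSup (alphaSet_bddAbove G w) ⟨S, hS, rfl⟩

lemma singleton_stable (i : V) : IsStableSet G {i} := by
  intro a ha b hb
  simp only [Finset.mem_singleton] at ha hb
  subst ha; subst hb; exact G.irrefl

/-- Weak duality: if every stable set has `w`-weight at most 1, then `⟨w,z⟩` is at
most the value of any feasible fractional coloring of `z`. -/
lemma weak_duality (w z : V → ℝ) (hw : 0 ≤ w)
    (hws : ∀ S : Finset V, IsStableSet G S → ∑ i ∈ S, w i ≤ 1)
    (y : Finset V → ℝ) (hy0 : ∀ S, 0 ≤ y S)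
    (hyst : ∀ S, ¬ IsStableSet G S → y S = 0)
    (hycov : ∀ i, z i ≤ ∑ S : Finset V, (if i ∈ S then y S else 0)) :
    ip w z ≤ ∑ S : Finset V, y S := by
  have h1 : ip w z ≤ ∑ i, w i * (∑ S : Finset V, (if i ∈ S then y S else 0)) := by
    refine Finset.sum_le_sum fun i _ => ?_
    exact mul_le_mul_of_nonneg_left (hycov i) (hw i)
  refine h1.trans ?_
  have h2 : ∀ i, w i * (∑ S : Finset V, (if i ∈ S then y S else 0)) =
      ∑ S : Finset V, (if i ∈ S then w i * y S else 0) := by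
    intro i
    rw [Finset.mul_sum]
    exact Finset.sum_congr rfl fun S _ => by split <;> simp
  simp_rw [h2]
  rw [Finset.sum_comm]
  refine Finset.sum_le_sum fun S _ => ?_
  have h3 : ∑ i, (if i ∈ S then w i * y S else 0) = (∑ i ∈ S, w i) * y S := by
    rw [Finset.sum_ite_mem, Finset.univ_inter, Finset.sum_mul]
  rw [h3]
  by_cases hS : IsStableSet G S
  · calc (∑ i ∈ S, w i) * y S ≤ 1 * y S :=
        mul_le_mul_of_nonneg_right (hws S hS) (hy0 S)
      _ = y S := one_mul _
  · simp [hyst S hS]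

/-- The feasible set of the fractional chromatic LP is bounded below by 0. -/
lemma chiSet_nonneg (z : V → ℝ) {r : ℝ}
    (hr : r ∈ {r : ℝ | ∃ y : Finset V → ℝ,
      (∀ S, 0 ≤ y S) ∧ (∀ S, ¬ IsStableSet G S → y S = 0) ∧
      (∀ i, z i ≤ ∑ S : Finset V, (if i ∈ S then y S else 0)) ∧
      r = ∑ S : Finset V, y S}) : 0 ≤ r := by
  obtain ⟨y, hy0, -, -, rfl⟩ := hr
  exact Finset.sum_nonneg fun S _ => hy0 S

/-- The fractional chromatic LP is feasible (via singletons). -/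
lemma chiSet_nonempty (z : V → ℝ) (hz : 0 ≤ z) :
    {r : ℝ | ∃ y : Finset V → ℝ,
      (∀ S, 0 ≤ y S) ∧ (∀ S, ¬ IsStableSet G S → y S = 0) ∧
      (∀ i, z i ≤ ∑ S : Finset V, (if i ∈ S then y S else 0)) ∧
      r = ∑ S : Finset V, y S}.Nonempty := by
  refine ⟨_, fun S => ∑ j, if S = {j} then z j else 0, ?_, ?_, ?_, rfl⟩
  · intro S
    exact Finset.sum_nonneg fun j _ => by split <;> [exact hz j; exact le_rfl]
  · intro S hS
    refine Finset.sum_eq_zero fun j _ => ?_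
    have : S ≠ ({j} : Finset V) := by
      rintro rfl; exact hS (singleton_stable G j)
    simp [this]
  · intro i
    have hterm : (fun S : Finset V => if i ∈ S then
        (∑ j, if S = {j} then z j else 0) else 0) {i} = z i := by
      simp [Finset.singleton_inj, Finset.sum_ite_eq]
    calc z i = _ := hterm.symm
      _ ≤ ∑ S : Finset V, (if i ∈ S then (∑ j, if S = {j} then z j else 0) else 0) := by
        refine Finset.single_le_sum (f := fun S : Finset V => if i ∈ S then (∑ j, if S = {j} then z j else 0) else 0) (fun S _ => ?_) (Finset.mem_univ ({i} : Finset V))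
        split
        · exact Finset.sum_nonneg fun j _ => by split <;> [exact hz j; exact le_rfl]
        · exact le_rfl

end BCAux

/-- a positive definite monotone gauge squeezed between `α(G,·)`
and `‖·‖₁` dualizes to one squeezed between `‖·‖_∞` and `χ_f(G,·)`, and
conversely. -/
theorem bound_conversion (G : SimpleGraph V) (β : (V → ℝ) → ℝ)
    (hβ : IsPDMGauge β) :
    ((∀ w : V → ℝ, 0 ≤ w → alphaW G w ≤ β w ∧ β w ≤ ∑ i, |w i|) →
      ∀ z : V → ℝ, 0 ≤ z →
        (⨆ i, |z i|) ≤ dualGauge β z ∧ dualGauge β z ≤ chiF G z) ∧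
    ((∀ z : V → ℝ, 0 ≤ z → (⨆ i, |z i|) ≤ β z ∧ β z ≤ chiF G z) →
      ∀ w : V → ℝ, 0 ≤ w →
        alphaW G w ≤ dualGauge β w ∧ dualGauge β w ≤ ∑ i, |w i|) := by
  obtain ⟨hβ0, hβnn, hβhom, hβsub, hβpos, hβmono⟩ := hβ
  constructor
  · -- Part 1
    intro h z hz
    have key : ∀ r ∈ {r : ℝ | ∃ w : V → ℝ, 0 ≤ w ∧ β w ≤ 1 ∧ r = ip w z},
        ∀ s ∈ {r : ℝ | ∃ y : Finset V → ℝ,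
          (∀ S, 0 ≤ y S) ∧ (∀ S, ¬ IsStableSet G S → y S = 0) ∧
          (∀ i, z i ≤ ∑ S : Finset V, (if i ∈ S then y S else 0)) ∧
          r = ∑ S : Finset V, y S}, r ≤ s := by
      rintro r ⟨w, hw, hw1, rfl⟩ s ⟨y, hy0, hyst, hycov, rfl⟩
      refine weak_duality G w z hw (fun S hS => ?_) y hy0 hyst hycov
      exact ((stable_sum_le_alpha G w hS).trans (h w hw).1).trans hw1
    have h0mem : (0:ℝ) ∈ {r : ℝ | ∃ w : V → ℝ, 0 ≤ w ∧ β w ≤ 1 ∧ r = ip w z} :=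
      ⟨0, le_rfl, by rw [hβ0]; norm_num, by simp [ip]⟩
    obtain ⟨s₀, hs₀⟩ := chiSet_nonempty G z hz
    have hbdd : BddAbove {r : ℝ | ∃ w : V → ℝ, 0 ≤ w ∧ β w ≤ 1 ∧ r = ip w z} :=
      ⟨s₀, fun r hr => key r hr s₀ hs₀⟩
    have hmemi : ∀ i, z i ∈ {r : ℝ | ∃ w : V → ℝ, 0 ≤ w ∧ β w ≤ 1 ∧ r = ip w z} := by
      intro i
      have hsnn : (0 : V → ℝ) ≤ Pi.single i 1 := by
        intro j
        simp only [Pi.zero_apply, Pi.single_apply]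
        split <;> norm_num
      refine ⟨Pi.single i 1, hsnn, ?_, ?_⟩
      · refine (h _ hsnn).2.trans ?_
        have : ∀ j, |(Pi.single i 1 : V → ℝ) j| = if j = i then (1:ℝ) else 0 := by
          intro j; simp only [Pi.single_apply]; split <;> simp
        simp [this]
      · unfold ip
        have : ∀ j, (Pi.single i 1 : V → ℝ) j * z j = if j = i then z j else 0 := by
          intro j; simp only [Pi.single_apply]; split <;> simp
        simp [this]
    constructor
    · refine Real.iSup_le (fun i => ?_) (le_csSup hbdd h0mem)
      rw [abs_of_nonneg (hz i)]
      exact le_csSup hbdd (hmemi i)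
    · exact csSup_le ⟨0, h0mem⟩ fun r hr =>
        le_csInf (chiSet_nonempty G z hz) fun s hs => key r hr s hs
  · -- Part 2
    intro h w hw
    have hub : ∀ r ∈ {r : ℝ | ∃ x : V → ℝ, 0 ≤ x ∧ β x ≤ 1 ∧ r = ip x w},
        r ≤ ∑ i, |w i| := by
      rintro r ⟨x, hx, hx1, rfl⟩
      have hxle : ∀ i, x i ≤ 1 := by
        intro i
        calc x i ≤ |x i| := le_abs_self _
          _ ≤ ⨆ j, |x j| :=
            le_ciSup (f := fun j => |x j|) (Set.finite_range _).bddAbove i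
          _ ≤ β x := (h x hx).1
          _ ≤ 1 := hx1
      calc ip x w = ∑ i, x i * w i := rfl
        _ ≤ ∑ i, 1 * w i :=
          Finset.sum_le_sum fun i _ => mul_le_mul_of_nonneg_right (hxle i) (hw i)
        _ = ∑ i, |w i| :=
          Finset.sum_congr rfl fun i _ => by rw [one_mul, abs_of_nonneg (hw i)]
    have h0mem : (0:ℝ) ∈ {r : ℝ | ∃ x : V → ℝ, 0 ≤ x ∧ β x ≤ 1 ∧ r = ip x w} :=
      ⟨0, le_rfl, by rw [hβ0]; norm_num, by simp [ip]⟩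
    have hbdd : BddAbove {r : ℝ | ∃ x : V → ℝ, 0 ≤ x ∧ β x ≤ 1 ∧ r = ip x w} :=
      ⟨∑ i, |w i|, hub⟩
    constructor
    · refine csSup_le ⟨0, ∅, ?_, by simp⟩ ?_
      · intro i hi; exact absurd hi (Finset.notMem_empty i)
      rintro r ⟨S, hS, rfl⟩
      set x : V → ℝ := fun i => if i ∈ S then 1 else 0 with hxdef
      have hx0 : 0 ≤ x := by
        intro i; simp only [hxdef]; split <;> norm_num
      have hchi : chiF G x ≤ 1 := by
        refine csInf_le ⟨0, fun s hs => chiSet_nonneg G x hs⟩ ?_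
        refine ⟨fun T => if T = S then 1 else 0, ?_, ?_, ?_, ?_⟩
        · intro T; dsimp only; split <;> norm_num
        · intro T hT
          rcases eq_or_ne T S with rfl | hTS
          · exact absurd hS hT
          · simp [hTS]
        · intro i
          show x i ≤ ∑ T : Finset V, (if i ∈ T then (if T = S then (1:ℝ) else 0) else 0)
          have hcongr : ∀ T : Finset V, (if i ∈ T then (if T = S then (1:ℝ) else 0) else 0)
              = if T = S then (if i ∈ S then (1:ℝ) else 0) else 0 := by
            intro T
            rcases eq_or_ne T S with rfl | hTS
            · simp
            · simp [hTS]
          have hsum : ∑ T : Finset V, (if i ∈ T then (if T = S then (1:ℝ) else 0) else 0)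
              = if i ∈ S then 1 else 0 := by
            rw [Finset.sum_congr rfl (fun T _ => hcongr T),
              Finset.sum_ite_eq' Finset.univ S]
            simp
          refine le_trans ?_ (le_of_eq hsum.symm)
          simp [hxdef]
        · simp
      have hβx : β x ≤ 1 := (h x hx0).2.trans hchi
      have hip : ip x w = ∑ i ∈ S, w i := by
        unfold ip
        have : ∀ i, x i * w i = if i ∈ S then w i else 0 := by
          intro i; simp only [hxdef]; split <;> simp
        simp only [this]
        rw [Finset.sum_ite_mem, Finset.univ_inter]
      exact le_csSup hbdd ⟨x, hx0, hβx, hip.symm⟩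
    · exact csSup_le ⟨0, h0mem⟩ hub
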